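/- Under the varying-coefficient model E[Y(t) | X(t), Z(t)] = X(t)ᵀβ(t) + Z(t)ᵀγ(t) with E[Z(t) | X(t)] = E[Z(t)], the centered variables satisfy E[Ỹ(t) | X̃(t)] = X̃(t)ᵀ β(t), where Ỹ(t) = Y(t) - E[Y(t)] and X̃(t) = X(t) - E[X(t)]. -/

import Mathlib

/-!
By the tower property, `E[Y | X] = E[E[Y | X, Z] | X] = Xᵀβ + E[Z | X]ᵀγ = Xᵀβ + E[Z]ᵀγ`.
Taking expectations gives `E Y = E[X]ᵀβ + E[Z]ᵀγ`, and subtracting the two identities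
cancels the `Z`-term, leaving `E[Y - E Y | X] = (X - E X)ᵀβ`.
-/

open MeasureTheory

namespace MeasureTheory

variable {Ω : Type*} {m m0 : MeasurableSpace Ω} {μ : Measure Ω}

theorem condExp_sum_mul_const_of_ae_eq {ι : Type*} [Fintype ι] {f g : ι → Ω → ℝ}
    (hf : ∀ i, Integrable (f i) μ) (hfg : ∀ i, μ[f i | m] =ᵐ[μ] g i) (c : ι → ℝ) :
    μ[fun ω => ∑ i, f i ω * c i | m] =ᵐ[μ] fun ω => ∑ i, g i ω * c i := by
  have hsum : (fun ω => ∑ i, f i ω * c i) = ∑ i, c i • f i := by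
    funext ω
    simp [Finset.sum_apply, mul_comm]
  have hsmul : ∀ᵐ ω ∂μ, ∀ i, μ[c i • f i | m] ω = c i * g i ω := by
    filter_upwards [ae_all_iff.mpr fun i => condExp_smul (c i) (f i) m,
      ae_all_iff.mpr hfg] with ω hsmul hg i
    simp [hsmul i, hg i]
  rw [hsum]
  filter_upwards [condExp_finsetSum (s := Finset.univ) (fun i _ => (hf i).smul (c i)) m,
    hsmul] with ω hω hsmul
  simp [hω, Finset.sum_apply, hsmul, mul_comm]

theorem condExp_sub_integral_of_ae_eq [IsProbabilityMeasure μ] (hm : m ≤ m0) {f g : Ω → ℝ}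
    (hf : Integrable f μ) (hfg : μ[f | m] =ᵐ[μ] g) :
    μ[fun ω => f ω - ∫ ω', f ω' ∂μ | m] =ᵐ[μ] fun ω => g ω - ∫ ω', g ω' ∂μ := by
  have hmean : ∫ ω, f ω ∂μ = ∫ ω, g ω ∂μ := by
    rw [← integral_condExp hm, integral_congr_ae hfg]
  rw [← hmean]
  refine (condExp_sub hf (integrable_const _) m).trans ?_
  filter_upwards [hfg] with ω hω
  simp [hω, condExp_const hm]

end MeasureTheory

/-- Under the varying-coefficient model `E[Y | X, Z] = Xᵀβ + Zᵀγ` with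
`E[Z | X] = E[Z]`, the centered variables satisfy
`E[Ỹ | X̃] = X̃ᵀ β`, where `Ỹ = Y - E Y` and `X̃ = X - E X`
(note `σ(X̃) = σ(X)`). -/
theorem condexp_centered_of_orthogonality
    {Ω : Type*} [m0 : MeasurableSpace Ω] (μ : Measure Ω) [IsProbabilityMeasure μ]
    {p q : ℕ}
    (X : Ω → (Fin p → ℝ)) (Z : Ω → (Fin q → ℝ)) (Y : Ω → ℝ)
    (β : Fin p → ℝ) (γ : Fin q → ℝ)
    (hX : Measurable X) (hZ : Measurable Z)
    (hY : Integrable Y μ)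
    (hXint : ∀ i, Integrable (fun ω => X ω i) μ)
    (hZint : ∀ j, Integrable (fun ω => Z ω j) μ)
    (hmodel :
      μ[Y | MeasurableSpace.comap (fun ω => (X ω, Z ω)) inferInstance] =ᵐ[μ]
        fun ω => (∑ i, X ω i * β i) + ∑ j, Z ω j * γ j)
    (horth : ∀ j,
      μ[(fun ω => Z ω j) | MeasurableSpace.comap X inferInstance] =ᵐ[μ]
        fun _ => ∫ ω, Z ω j ∂μ) :
    μ[(fun ω => Y ω - ∫ ω', Y ω' ∂μ) | MeasurableSpace.comap X inferInstance]
      =ᵐ[μ] fun ω => ∑ i, (X ω i - ∫ ω', X ω' i ∂μ) * β i := by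
  set mX := MeasurableSpace.comap X inferInstance
  set mXZ := MeasurableSpace.comap (fun ω => (X ω, Z ω)) inferInstance
  have hle : mX ≤ mXZ := MeasurableSpace.comap_le_comap_of_eq_comp Prod.fst measurable_fst rfl
  have hXβ : Integrable (fun ω => ∑ i, X ω i * β i) μ :=
    integrable_finsetSum _ fun i _ => (hXint i).mul_const _
  have hZγ : Integrable (fun ω => ∑ j, Z ω j * γ j) μ :=
    integrable_finsetSum _ fun j _ => (hZint j).mul_const _
  have hXself : ∀ i, μ[(fun ω => X ω i) | mX] = fun ω => X ω i := fun i =>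
    condExp_of_stronglyMeasurable hX.comap_le
      ((measurable_pi_apply i).comp (comap_measurable X)).stronglyMeasurable (hXint i)
  have hcond : μ[Y | mX] =ᵐ[μ] fun ω => (∑ i, X ω i * β i) + ∑ j, (∫ ω', Z ω' j ∂μ) * γ j :=
    calc μ[Y | mX]
      _ =ᵐ[μ] μ[μ[Y | mXZ] | mX] := (condExp_condExp_of_le hle (hX.prodMk hZ).comap_le).symm
      _ =ᵐ[μ] μ[(fun ω => ∑ i, X ω i * β i) + fun ω => ∑ j, Z ω j * γ j | mX] :=
        condExp_congr_ae hmodel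
      _ =ᵐ[μ] μ[fun ω => ∑ i, X ω i * β i | mX] + μ[fun ω => ∑ j, Z ω j * γ j | mX] :=
        condExp_add hXβ hZγ mX
      _ =ᵐ[μ] _ :=
        (condExp_sum_mul_const_of_ae_eq hXint (fun i => (hXself i).eventuallyEq) β).add
          (condExp_sum_mul_const_of_ae_eq hZint horth γ)
  refine (condExp_sub_integral_of_ae_eq hX.comap_le hY hcond).trans (ae_of_all _ fun ω => ?_)
  rw [integral_add hXβ (integrable_const _),
    integral_finsetSum _ fun i _ => (hXint i).mul_const _]
  simp only [integral_mul_const, integral_const, probReal_univ, one_smul, sub_mul,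
    Finset.sum_sub_distrib]
  ring
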